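/- arXiv:math/0607278 — 4 statements merged into one kernel-verified Lean document; each statement's English description precedes it below -/
import Mathlib

section
/- Let 1 → A → B → C → 1 be an exact sequence of groups where A is isomorphic to ℤ^q for some q ≥ 0, A is contained in the center of B, and C is biorderable. Then B is biorderable. -/
/-- Given an exact sequence `1 → A → B → C → 1` with `A ≅ ℤ^q`, `A` central in `B`,
and `C` biorderable, the group `B` is biorderable. -/
theorem biorderable_of_central_extension {A B C : Type*} [Group A] [Group B] [Group C]
    (q : ℕ) (eA : A ≃* Multiplicative (Fin q → ℤ))
    (ι : A →* B) (φ : B →* C)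
    (hι : Function.Injective ι) (hφ : Function.Surjective φ)
    (hexact : φ.ker = ι.range)
    (hcentral : ∀ a : A, ι a ∈ Subgroup.center B)
    (hC : ∃ _ : LinearOrder C, ∀ f g h₁ h₂ : C, f < g → h₁ * f * h₂ < h₁ * g * h₂) :
    ∃ _ : LinearOrder B, ∀ f g h₁ h₂ : B, f < g → h₁ * f * h₂ < h₁ * g * h₂ := by
  classical
  obtain ⟨ordC, hordC⟩ := hC
  letI := ordC
  letI : WellFoundedLT (Fin q) := inferInstance
  letI ordG : LinearOrder (Lex (Fin q → ℤ)) := inferInstance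
  -- a set-theoretic section of φ
  choose s hs using hφ
  have hker : ∀ b : B, b * (s (φ b))⁻¹ ∈ ι.range := by
    intro b
    rw [← hexact, MonoidHom.mem_ker, map_mul, map_inv, hs, mul_inv_cancel]
  choose r hr using hker
  -- hr : ∀ b, ι (r b) = b * (s (φ b))⁻¹
  -- key: the "difference" of r-values depends only on the difference
  have hdiff : ∀ x y : B, φ x = φ y → (r x)⁻¹ * r y = eA.symm (eA (r x))⁻¹ * eA.symm (eA (r y)) := by
    intro x y _; simp
  have hdiff' : ∀ x y : B, φ x = φ y → ι ((r x)⁻¹ * r y) = x⁻¹ * y := by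
    intro x y hxy
    have hmem : x⁻¹ * y ∈ ι.range := by
      rw [← hexact, MonoidHom.mem_ker, map_mul, map_inv, hxy, inv_mul_cancel]
    obtain ⟨a, ha⟩ := hmem
    have hcent := hcentral a
    rw [Subgroup.mem_center_iff] at hcent
    have h0 : ι ((r x)⁻¹ * r y) = s (φ y) * (x⁻¹ * y) * (s (φ y))⁻¹ := by
      rw [map_mul, map_inv, hr, hr, hxy]; group
    rw [h0, ← ha, hcent (s (φ y))]; group
  -- the order embedding target
  let F : B → Lex (C × Lex (Fin q → ℤ)) :=
    fun b => toLex (φ b, toLex (Multiplicative.toAdd (eA (r b))))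
  have hFinj : Function.Injective F := by
    intro x y hxy
    have h1 : φ x = φ y := congrArg (fun p => (ofLex p).1) hxy
    have h2 : eA (r x) = eA (r y) := congrArg (fun p => Multiplicative.ofAdd (ofLex (ofLex p).2)) hxy
    have h3 : r x = r y := eA.injective h2
    have := hr x
    rw [h3, hr y, h1] at this
    exact (mul_right_cancel this).symm
  letI ordB : LinearOrder B := LinearOrder.lift' F hFinj
  refine ⟨ordB, ?_⟩
  have hlt : ∀ x y : B, x < y ↔ F x < F y := by
    intro x y
    rw [lt_iff_le_not_ge, lt_iff_le_not_ge]
    exact Iff.rfl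
  intro f g h₁ h₂ hfg
  rw [hlt] at hfg ⊢
  rw [Prod.Lex.lt_iff] at hfg ⊢
  rcases hfg with h | ⟨heq0, hlt20⟩
  · left
    show φ (h₁ * f * h₂) < φ (h₁ * g * h₂)
    simp only [map_mul]
    exact hordC _ _ _ _ h
  · -- φ f = φ g
    have heq : φ f = φ g := heq0
    have hlt2 : toLex (Multiplicative.toAdd (eA (r f))) < toLex (Multiplicative.toAdd (eA (r g))) := hlt20
    have heqB : φ (h₁ * f * h₂) = φ (h₁ * g * h₂) := by
      simp only [map_mul, heq]
    refine Or.inr ⟨heqB, ?_⟩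
    -- difference of second components is the same
    have key : (r (h₁ * f * h₂))⁻¹ * r (h₁ * g * h₂) = (r f)⁻¹ * r g := by
      apply hι
      rw [hdiff' _ _ heqB, hdiff' _ _ heq]
      have hmem : f⁻¹ * g ∈ ι.range := by
        rw [← hexact, MonoidHom.mem_ker, map_mul, map_inv, heq, inv_mul_cancel]
      obtain ⟨a, ha⟩ := hmem
      have hcent := hcentral a
      rw [Subgroup.mem_center_iff] at hcent
      have h0 : (h₁ * f * h₂)⁻¹ * (h₁ * g * h₂) = h₂⁻¹ * (f⁻¹ * g) * h₂ := by group
      rw [h0, ← ha, hcent h₂⁻¹]; group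
    -- translate to the additive lex group
    set x₁ : Lex (Fin q → ℤ) := toLex (Multiplicative.toAdd (eA (r f)))
    set x₂ : Lex (Fin q → ℤ) := toLex (Multiplicative.toAdd (eA (r g)))
    set y₁ : Lex (Fin q → ℤ) := toLex (Multiplicative.toAdd (eA (r (h₁ * f * h₂))))
    set y₂ : Lex (Fin q → ℤ) := toLex (Multiplicative.toAdd (eA (r (h₁ * g * h₂))))
    have hsub : -y₁ + y₂ = -x₁ + x₂ := by
      have := congrArg (fun a : A => toLex (Multiplicative.toAdd (eA a))) key
      simpa [map_mul, toAdd_mul, toAdd_inv] using this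
    have : y₁ < y₂ := by
      have h1 : (0 : Lex (Fin q → ℤ)) < -x₁ + x₂ := by
        rwa [lt_neg_add_iff_add_lt, add_zero]
      rw [← hsub, lt_neg_add_iff_add_lt, add_zero] at h1
      exact h1
    exact this
end

section
/- Let f, g ∈ SL₂(ℤ) be two elements of infinite order such that f^m = g^m for some m ≥ 1. Then f = g or f = -g. -/
lemma CH2 (A : Matrix (Fin 2) (Fin 2) ℤ) (hA : A.det = 1) :
    A * A = A.trace • A - 1 := by
  have h := Matrix.det_fin_two A
  rw [hA] at h
  ext i j
  fin_cases i <;> fin_cases j <;>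
    simp only [Matrix.mul_apply, Fin.sum_univ_two, Matrix.sub_apply, Matrix.smul_apply,
      Matrix.one_apply, Matrix.trace_fin_two, smul_eq_mul, Fin.isValue] <;>
    norm_num <;> nlinarith [h]

def cheb (t : ℤ) : ℕ → ℤ
  | 0 => 0
  | 1 => 1
  | (n+2) => t * cheb t (n+1) - cheb t n

lemma pow_cheb (A : Matrix (Fin 2) (Fin 2) ℤ) (hA : A.det = 1) (n : ℕ) :
    A ^ (n + 1) = cheb A.trace (n+1) • A - cheb A.trace n • 1 := by
  induction n with
  | zero => simp [cheb]
  | succ k ih =>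
      have e : A ^ (k + 1 + 1) = A ^ (k+1) * A := by rw [pow_succ]
      rw [e, ih, sub_mul, smul_mul_assoc, smul_mul_assoc, one_mul, CH2 A hA]
      rw [show cheb A.trace (k+2) = A.trace * cheb A.trace (k+1) - cheb A.trace k from rfl]
      module

lemma cheb_grow (t : ℤ) (ht : 2 ≤ |t|) :
    ∀ n : ℕ, (n : ℤ) ≤ |cheb t n| ∧ |cheb t n| + 1 ≤ |cheb t (n+1)| := by
  intro n
  induction n with
  | zero => simp [cheb]
  | succ k ih =>
      obtain ⟨h1, h2⟩ := ih
      constructor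
      · push_cast; linarith
      · have e : cheb t (k+2) = t * cheb t (k+1) - cheb t k := rfl
        have h3 : |t * cheb t (k+1)| - |cheb t k| ≤ |t * cheb t (k+1) - cheb t k| :=
          abs_sub_abs_le_abs_sub _ _
        rw [abs_mul] at h3
        rw [e]
        nlinarith [abs_nonneg (cheb t (k+1))]

lemma cheb_ne_zero (t : ℤ) (ht : 2 ≤ |t|) (n : ℕ) (hn : 1 ≤ n) : cheb t n ≠ 0 := by
  have h1 := (cheb_grow t ht n).1
  intro h
  rw [h] at h1
  simp at h1
  omega

lemma cheb_12 : ∀ t : ℤ, |t| ≤ 1 → cheb t 12 = 0 ∧ cheb t 11 = -1 := by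
  intro t ht
  rw [abs_le] at ht
  obtain ⟨hl, hr⟩ := ht
  interval_cases t <;> exact ⟨rfl, rfl⟩

lemma sq_le_of_abs_le (x : ℤ) (n : ℤ) (h : |x| ≤ n) : x^2 ≤ n^2 := by
  nlinarith [sq_abs x, abs_nonneg x]

lemma abs_le_one_of_sq_le_three (x : ℤ) (h : x^2 ≤ 3) : |x| ≤ 1 := by
  nlinarith [sq_abs x, abs_nonneg x]

lemma key_entries (a b c d p q r u : ℤ) (hF : a*d - b*c = 1) (hH : p*u - q*r = 1)
    (hτ : |p + u| ≤ 1)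
    (h1 : b*r = q*c) (h2 : q*(a-d) = b*(p-u)) (h3 : c*(p-u) = r*(a-d)) :
    |a + d| ≤ 1 ∨ (b = 0 ∧ c = 0 ∧ a = d) := by
  have hw : (p-u)^2 + 4*q*r ≤ -3 := by
    have h5 : (p+u)^2 ≤ 1^2 := sq_le_of_abs_le _ _ hτ
    nlinarith
  have i1 : ((a-d)^2 + 4*b*c) * q^2 = b^2 * ((p-u)^2 + 4*q*r) := by
    linear_combination (q*(a-d) + b*(p-u)) * h2 - 4*b*q*h1
  have i2 : ((a-d)^2 + 4*b*c) * r^2 = c^2 * ((p-u)^2 + 4*q*r) := by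
    linear_combination (-(c*(p-u)) - r*(a-d)) * h3 + 4*c*r*h1
  have i3 : ((a-d)^2 + 4*b*c) * (p-u)^2 = (a-d)^2 * ((p-u)^2 + 4*q*r) := by
    linear_combination (-4*c*(p-u)) * h2 + 4*q*(a-d)*h3
  have N1 : 1 ≤ (p-u)^2 + q^2 + r^2 := by
    rcases eq_or_ne q 0 with hq | hq
    · rcases eq_or_ne r 0 with hr | hr
      · subst hq; subst hr; nlinarith [sq_nonneg (p-u)]
      · have : 1 ≤ r^2 := by rcases lt_or_gt_of_ne hr with h' | h' <;> nlinarith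
        nlinarith [sq_nonneg q, sq_nonneg (p-u)]
    · have : 1 ≤ q^2 := by rcases lt_or_gt_of_ne hq with h' | h' <;> nlinarith
      nlinarith [sq_nonneg r, sq_nonneg (p-u)]
  have big : ((a-d)^2 + 4*b*c) * ((p-u)^2 + q^2 + r^2)
      = ((a-d)^2 + b^2 + c^2) * ((p-u)^2 + 4*q*r) := by
    linear_combination i1 + i2 + i3
  have hM0 : (0:ℤ) ≤ (a-d)^2 + b^2 + c^2 := by positivity
  have hRHS : ((a-d)^2 + b^2 + c^2) * ((p-u)^2 + 4*q*r) ≤ 0 :=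
    mul_nonpos_of_nonneg_of_nonpos hM0 (by linarith)
  have hQvle : (a-d)^2 + 4*b*c ≤ 0 := by
    by_contra hpos
    push_neg at hpos
    have hN0 : (0:ℤ) < (p-u)^2 + q^2 + r^2 := by linarith
    have := mul_pos hpos hN0
    linarith
  rcases eq_or_lt_of_le hQvle with hQ0 | hQneg
  · right
    have hMQ : ((a-d)^2 + b^2 + c^2) * ((p-u)^2 + 4*q*r) = 0 := by
      rw [← big, hQ0, zero_mul]
    have hM : (a-d)^2 + b^2 + c^2 = 0 :=
      (mul_eq_zero.mp hMQ).resolve_right (by intro h'; linarith)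
    have hb : b^2 = 0 := by linarith [sq_nonneg (a-d), sq_nonneg c, sq_nonneg b]
    have hc : c^2 = 0 := by linarith [sq_nonneg (a-d), sq_nonneg c, sq_nonneg b]
    have had : (a-d)^2 = 0 := by linarith [sq_nonneg (a-d), sq_nonneg c, sq_nonneg b]
    exact ⟨sq_eq_zero_iff.mp hb, sq_eq_zero_iff.mp hc,
      sub_eq_zero.mp (sq_eq_zero_iff.mp had)⟩
  · left
    have h4 : (a+d)^2 ≤ 3 := by
      have e : (a+d)^2 = ((a-d)^2 + 4*b*c) + 4*(a*d - b*c) := by ring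
      rw [hF] at e
      omega
    exact abs_le_one_of_sq_le_three _ h4

/-- An element of SL₂(ℤ) whose matrix has trace of absolute value at most 1 has finite order. -/
lemma finOrder_of_small_trace (f : Matrix.SpecialLinearGroup (Fin 2) ℤ)
    (h : |Matrix.trace (f : Matrix (Fin 2) (Fin 2) ℤ)| ≤ 1) : IsOfFinOrder f := by
  obtain ⟨h12, h11⟩ := cheb_12 _ h
  have hdet : (f : Matrix (Fin 2) (Fin 2) ℤ).det = 1 := f.prop
  have hp : (f : Matrix (Fin 2) (Fin 2) ℤ) ^ 12 = 1 := by
    have := pow_cheb (f : Matrix (Fin 2) (Fin 2) ℤ) hdet 11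
    rw [show (11:ℕ)+1 = 12 from rfl, h12, h11] at this
    simpa using this
  rw [isOfFinOrder_iff_pow_eq_one]
  refine ⟨12, by norm_num, ?_⟩
  apply Subtype.coe_injective
  show ((f ^ 12 : Matrix.SpecialLinearGroup (Fin 2) ℤ) : Matrix (Fin 2) (Fin 2) ℤ)
      = ((1 : Matrix.SpecialLinearGroup (Fin 2) ℤ) : Matrix (Fin 2) (Fin 2) ℤ)
  rw [Matrix.SpecialLinearGroup.coe_pow, Matrix.SpecialLinearGroup.coe_one]
  exact hp

/-- Two infinite-order elements of `SL₂(ℤ)` with a common power agree up to sign. -/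
theorem SL2Z_pow_eq_infinite_order {f g : Matrix.SpecialLinearGroup (Fin 2) ℤ}
    (hf : ¬ IsOfFinOrder f) (hg : ¬ IsOfFinOrder g)
    (m : ℕ) (hm : 1 ≤ m) (h : f ^ m = g ^ m) : f = g ∨ f = -g := by
  set F := (f : Matrix (Fin 2) (Fin 2) ℤ) with hFdef
  set G := (g : Matrix (Fin 2) (Fin 2) ℤ) with hGdef
  have hdF : F.det = 1 := f.prop
  have hdG : G.det = 1 := g.prop
  have htF : 2 ≤ |F.trace| := by
    by_contra h'
    push_neg at h'
    exact hf (finOrder_of_small_trace f (by rw [← hFdef]; omega))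
  have htG : 2 ≤ |G.trace| := by
    by_contra h'
    push_neg at h'
    exact hg (finOrder_of_small_trace g (by rw [← hGdef]; omega))
  obtain ⟨k, rfl⟩ : ∃ k, m = k + 1 := ⟨m - 1, by omega⟩
  have hmat : F ^ (k+1) = G ^ (k+1) := by
    have := congrArg (fun x : Matrix.SpecialLinearGroup (Fin 2) ℤ =>
      (x : Matrix (Fin 2) (Fin 2) ℤ)) h
    simpa [Matrix.SpecialLinearGroup.coe_pow] using this
  have heq : cheb F.trace (k+1) • F - cheb F.trace k • 1
      = cheb G.trace (k+1) • G - cheb G.trace k • 1 := by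
    rw [← pow_cheb F hdF k, ← pow_cheb G hdG k, hmat]
  have hγ : cheb G.trace (k+1) ≠ 0 := cheb_ne_zero _ htG _ (by omega)
  have hGF : cheb G.trace (k+1) • G
      = cheb F.trace (k+1) • F + (cheb G.trace k - cheb F.trace k) • 1 := by
    have := heq.symm
    rw [sub_eq_iff_eq_add] at this
    rw [this]
    module
  -- F and G commute
  have hcommFG : F * G = G * F := by
    have h1 : F * (cheb G.trace (k+1) • G) = (cheb G.trace (k+1) • G) * F := by
      rw [hGF]
      noncomm_ring
    rw [mul_smul_comm, smul_mul_assoc] at h1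
    ext i j
    have := congrFun (congrFun h1 i) j
    simp only [Matrix.smul_apply, smul_eq_mul] at this
    exact mul_left_cancel₀ hγ this
  have hfg : Commute f g := by
    apply Subtype.coe_injective
    simpa [Matrix.SpecialLinearGroup.coe_mul] using hcommFG
  have hcinv : Commute f g⁻¹ := hfg.inv_right
  have hpow1 : (f * g⁻¹) ^ (k+1) = 1 := by
    rw [hcinv.mul_pow, inv_pow, h, mul_inv_cancel]
  set H := ((f * g⁻¹ : Matrix.SpecialLinearGroup (Fin 2) ℤ) : Matrix (Fin 2) (Fin 2) ℤ)
    with hHdef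
  have hdH : H.det = 1 := (f * g⁻¹).prop
  have hHpow : H ^ (k+1) = 1 := by
    have := congrArg (fun x : Matrix.SpecialLinearGroup (Fin 2) ℤ =>
      (x : Matrix (Fin 2) (Fin 2) ℤ)) hpow1
    rw [hHdef, ← Matrix.SpecialLinearGroup.coe_pow, hpow1, Matrix.SpecialLinearGroup.coe_one]
  have hHeq : cheb H.trace (k+1) • H - cheb H.trace k • 1 = 1 := by
    rw [← pow_cheb H hdH k, hHpow]
  have hdH2 : H 0 0 * H 1 1 - H 0 1 * H 1 0 = 1 := by
    rw [← Matrix.det_fin_two H]; exact hdH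
  -- f = h * g at matrix level
  have hFHG : F = H * G := by
    rw [hHdef, hGdef, hFdef, ← Matrix.SpecialLinearGroup.coe_mul, inv_mul_cancel_right]
  rcases eq_or_ne (cheb H.trace (k+1)) 0 with hα0 | hα
  · -- degenerate: H has small trace, use commutant argument to contradict hf
    exfalso
    have hτ : |H.trace| ≤ 1 := by
      by_contra h'
      push_neg at h'
      exact cheb_ne_zero H.trace (by omega) (k+1) (by omega) hα0
    have hcfh : F * H = H * F := by
      have hc : Commute f (f * g⁻¹) := (Commute.refl f).mul_right hcinv
      have := congrArg (fun x : Matrix.SpecialLinearGroup (Fin 2) ℤ =>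
        (x : Matrix (Fin 2) (Fin 2) ℤ)) hc.eq
      rw [hFdef, hHdef, ← Matrix.SpecialLinearGroup.coe_mul, ← Matrix.SpecialLinearGroup.coe_mul, hc.eq]
    have e00 := congrFun (congrFun hcfh 0) 0
    have e01 := congrFun (congrFun hcfh 0) 1
    have e10 := congrFun (congrFun hcfh 1) 0
    simp only [Matrix.mul_apply, Fin.sum_univ_two] at e00 e01 e10
    have hdF2 : F 0 0 * F 1 1 - F 0 1 * F 1 0 = 1 := by
      rw [← Matrix.det_fin_two F]; exact hdF
    have hτ' : |H 0 0 + H 1 1| ≤ 1 := by rwa [Matrix.trace_fin_two] at hτ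
    have key := key_entries (F 0 0) (F 0 1) (F 1 0) (F 1 1) (H 0 0) (H 0 1) (H 1 0) (H 1 1)
      hdF2 hdH2 hτ' (by linarith) (by linarith) (by linarith)
    rcases key with hsmall | ⟨hb, hc, had⟩
    · rw [show |F 0 0 + F 1 1| = |F.trace| by rw [Matrix.trace_fin_two]] at hsmall
      omega
    · -- F is scalar ±1, hence finite order
      apply hf
      have ha : F 0 0 * F 0 0 = 1 := by rw [had] at hdF2 ⊢; rw [hb, hc] at hdF2; linarith
      rw [isOfFinOrder_iff_pow_eq_one]
      refine ⟨2, by norm_num, ?_⟩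
      apply Subtype.coe_injective
      show ((f ^ 2 : Matrix.SpecialLinearGroup (Fin 2) ℤ) : Matrix (Fin 2) (Fin 2) ℤ)
          = ((1 : Matrix.SpecialLinearGroup (Fin 2) ℤ) : Matrix (Fin 2) (Fin 2) ℤ)
      rw [Matrix.SpecialLinearGroup.coe_pow, Matrix.SpecialLinearGroup.coe_one]
      show F ^ 2 = 1
      rw [pow_two]
      ext i j
      fin_cases i <;> fin_cases j <;>
        simp only [Matrix.mul_apply, Fin.sum_univ_two, Matrix.one_apply, Fin.isValue] <;>
        norm_num <;> simp [hb, hc, ← had, ha]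
  · -- H is ± identity
    have e01 : H 0 1 = 0 := by
      have h' := congrFun (congrFun hHeq 0) 1
      simp only [Matrix.sub_apply, Matrix.smul_apply, Matrix.one_apply, smul_eq_mul] at h'
      norm_num at h'
      exact h'.resolve_left hα
    have e10 : H 1 0 = 0 := by
      have h' := congrFun (congrFun hHeq 1) 0
      simp only [Matrix.sub_apply, Matrix.smul_apply, Matrix.one_apply, smul_eq_mul] at h'
      norm_num at h'
      exact h'.resolve_left hα
    have ediag : H 0 0 = H 1 1 := by
      have d0 := congrFun (congrFun hHeq 0) 0
      have d1 := congrFun (congrFun hHeq 1) 1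
      simp only [Matrix.sub_apply, Matrix.smul_apply, Matrix.one_apply, smul_eq_mul] at d0 d1
      norm_num at d0 d1
      have : cheb H.trace (k+1) * H 0 0 = cheb H.trace (k+1) * H 1 1 := by linarith
      exact mul_left_cancel₀ hα this
    have hsq : H 0 0 * H 0 0 = 1 := by
      rw [ediag] at hdH2 ⊢
      rw [e01, e10] at hdH2
      linarith
    rcases mul_self_eq_one_iff.mp hsq with h1 | h1
    · left
      have hH1 : H = 1 := by
        ext i j
        fin_cases i <;> fin_cases j <;>
          simp only [Matrix.one_apply, Fin.isValue] <;> norm_num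
        · exact h1
        · exact e01
        · exact e10
        · rw [← ediag]; exact h1
      apply Subtype.coe_injective
      show F = G
      rw [hFHG, hH1, one_mul]
    · right
      have hH1 : H = -1 := by
        ext i j
        fin_cases i <;> fin_cases j <;>
          simp only [Matrix.one_apply, Matrix.neg_apply, Fin.isValue] <;> norm_num
        · exact h1
        · exact e01
        · exact e10
        · rw [← ediag]; exact h1
      apply Subtype.coe_injective
      show F = ((-g : Matrix.SpecialLinearGroup (Fin 2) ℤ) : Matrix (Fin 2) (Fin 2) ℤ)
      rw [Matrix.SpecialLinearGroup.coe_neg, ← hGdef, hFHG, hH1, neg_one_mul]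
end

section
/- Let G be a group, let Z be a central torsion-free subgroup of G, and let f, g ∈ G with f g f⁻¹ g⁻¹ ∈ Z and f^m = g^m for some m ≥ 1. If additionally G is torsion-free, then f = g. -/
/-!
Conjugation by `f` sends `g` to `⁅f, g⁆ * g`, and the commutator commutes with `g`, so it sends
`g ^ m` to `⁅f, g⁆ ^ m * g ^ m`. Since `g ^ m = f ^ m` is fixed by conjugation by `f`, the
commutator is a torsion element of `Z`, hence trivial; then `f` and `g` commute and `f * g⁻¹` is a
torsion element of `G`.
-/

open scoped commutatorElement

section

variable {G : Type*} [Group G] {f g : G} {m : ℕ}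

theorem commutatorElement_pow_mul_pow_eq_conj (hc : Commute ⁅f, g⁆ g) (m : ℕ) :
    ⁅f, g⁆ ^ m * g ^ m = f * g ^ m * f⁻¹ := by
  have hconj : f * g * f⁻¹ = ⁅f, g⁆ * g := by rw [commutatorElement_def]; group
  rw [← hc.mul_pow, ← hconj, conj_pow]

theorem commutatorElement_pow_eq_one_of_pow_eq (hc : Commute ⁅f, g⁆ g) (h : f ^ m = g ^ m) :
    ⁅f, g⁆ ^ m = 1 := by
  have hfix : ⁅f, g⁆ ^ m * g ^ m = g ^ m := by
    rw [commutatorElement_pow_mul_pow_eq_conj hc, ← h]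
    group
  exact mul_eq_right.mp hfix

theorem eq_of_pow_eq_of_commute (htf : ∀ x : G, ∀ n : ℕ, 1 ≤ n → x ^ n = 1 → x = 1)
    (hfg : Commute f g) (hm : 1 ≤ m) (h : f ^ m = g ^ m) : f = g :=
  mul_inv_eq_one.mp <| htf _ m hm <| by
    rw [hfg.inv_right.mul_pow, h, inv_pow, mul_inv_cancel]

end

/-- If `Z` is a central torsion-free subgroup of a torsion-free group `G`,
`f g f⁻¹ g⁻¹ ∈ Z`, and `f^m = g^m` for some `m ≥ 1`, then `f = g`. -/
theorem eq_of_pow_eq_of_commutator_central {G : Type*} [Group G] (Z : Subgroup G)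
    (hZcentral : Z ≤ Subgroup.center G)
    (hZtf : ∀ z ∈ Z, ∀ n : ℕ, 1 ≤ n → z ^ n = 1 → z = 1)
    (hGtf : ∀ x : G, ∀ n : ℕ, 1 ≤ n → x ^ n = 1 → x = 1)
    (f g : G) (hcomm : f * g * f⁻¹ * g⁻¹ ∈ Z)
    (m : ℕ) (hm : 1 ≤ m) (h : f ^ m = g ^ m) : f = g := by
  rw [← commutatorElement_def] at hcomm
  have hc : Commute ⁅f, g⁆ g := (Subgroup.mem_center_iff.mp (hZcentral hcomm) g).symm
  have hu : ⁅f, g⁆ = 1 := hZtf _ hcomm m hm (commutatorElement_pow_eq_one_of_pow_eq hc h)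
  exact eq_of_pow_eq_of_commute hGtf (commutatorElement_eq_one_iff_commute.mp hu) hm h
end

section
/- Let C₃ * C₂ be the free product of cyclic groups of orders 3 and 2 with generators ᾱ (order 3) and β̄ (order 2). Every finite-order element of C₃ * C₂ is conjugate to an element of C₃ = {1, ᾱ, ᾱ²} or of C₂ = {1, β̄}. -/
open Monoid

section general

variable {ι : Type*} [DecidableEq ι] {G : ι → Type*} [∀ i, Group (G i)] [∀ i, DecidableEq (G i)]

open Monoid.CoprodI Monoid.CoprodI.Word

/-- repeated append of a cyclically reduced nonempty word -/
def myRepl {i j : ι} (w : CoprodI.NeWord G i j) (hij : j ≠ i) : ℕ → CoprodI.NeWord G i j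
  | 0 => w
  | n+1 => CoprodI.NeWord.append (myRepl w hij n) hij w

lemma myRepl_prod {i j : ι} (w : CoprodI.NeWord G i j) (hij : j ≠ i) (n : ℕ) :
    (myRepl w hij n).prod = w.prod ^ (n + 1) := by
  induction n with
  | zero => simp [myRepl]
  | succ n ih => simp [myRepl, ih, pow_succ]

lemma word_prod_injective :
    Function.Injective (Word.prod : Word G → CoprodI G) :=
  (Word.equiv (M := G)).symm.injective

lemma neword_prod_ne_one {i j : ι} (w : CoprodI.NeWord G i j) : w.prod ≠ 1 := by
  intro h
  have h2 : w.toWord = Word.empty := word_prod_injective (by simpa [CoprodI.NeWord.prod] using h)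
  exact w.toList_ne_nil (by rw [show w.toList = w.toWord.toList from rfl, h2]; rfl)

lemma rcons_length {i : ι} (p : Word.Pair G i) :
    (Word.rcons p).toList.length ≤ p.tail.toList.length + 1 := by
  rw [Word.rcons]
  split <;> simp [Word.cons]

lemma length_smul_le {i : ι} (m : G i) (w : Word G) (hw : w.fstIdx = some i) :
    (CoprodI.of m • w).toList.length ≤ w.toList.length := by
  have hrc : Word.rcons (Word.equivPair i w) = w := by
    rw [← Word.equivPair_symm]; exact (Word.equivPair i).symm_apply_apply w
  have hne : (Word.equivPair i w).head ≠ 1 := by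
    intro h1
    have hwt : (Word.equivPair i w).tail = w := by
      conv_rhs => rw [← hrc]
      rw [Word.rcons, dif_pos h1]
    exact (Word.equivPair i w).fstIdx_ne (by rw [hwt]; exact hw)
  have hlen : w.toList.length = (Word.equivPair i w).tail.toList.length + 1 := by
    conv_lhs => rw [← hrc]
    rw [Word.rcons, dif_neg hne]
    simp [Word.cons]
  rw [Word.of_smul_def]
  refine le_trans (rcons_length _) ?_
  exact hlen.symm.le

end general

section general2
variable {ι : Type*} [DecidableEq ι] {G : ι → Type*} [∀ i, Group (G i)] [∀ i, DecidableEq (G i)]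
open Monoid.CoprodI Monoid.CoprodI.Word

lemma coprodI_finOrder_conj (x : CoprodI G) (hx : IsOfFinOrder x) :
    x = 1 ∨ ∃ (i : ι) (g : G i), IsConj x (CoprodI.of g) := by
  suffices H : ∀ (n : ℕ) (x : CoprodI G), IsOfFinOrder x →
      (Word.equiv x).toList.length ≤ n →
      x = 1 ∨ ∃ (i : ι) (g : G i), IsConj x (CoprodI.of g) from H _ x hx le_rfl
  intro n
  induction n with
  | zero =>
    intro x _ hlen
    left
    have h0 : (Word.equiv x).toList = [] := List.eq_nil_of_length_eq_zero (Nat.le_zero.mp hlen)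
    have he : Word.equiv x = Word.empty := Word.ext h0
    have hprod : Word.prod (Word.equiv x) = x := Word.equiv.symm_apply_apply x
    rw [← hprod, he, Word.prod_empty]
  | succ n ih =>
    intro x hx hlen
    have hprod : Word.prod (Word.equiv x) = x := Word.equiv.symm_apply_apply x
    set w : Word G := Word.equiv x with hwdef
    by_cases h0 : w.toList = []
    · left
      have he : w = Word.empty := Word.ext h0
      rw [← hprod, he, Word.prod_empty]
    · have hwne : w ≠ Word.empty := fun h => h0 (by rw [h]; rfl)
      obtain ⟨i, j, nw, hnw⟩ := CoprodI.NeWord.of_word w hwne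
      have hnwl : nw.toList = w.toList := congrArg Word.toList hnw
      have hnwprod : nw.prod = x := by rw [CoprodI.NeWord.prod, hnw, hprod]
      by_cases hij : i = j
      · subst hij
        rcases hlist : w.toList with _ | ⟨⟨k, a⟩, rest⟩
        · exact absurd hlist h0
        rcases hrest : rest with _ | ⟨l2, rest2⟩
        · -- single letter
          right
          refine ⟨k, a, ?_⟩
          have hxa : x = CoprodI.of a := by
            rw [← hprod, Word.prod, hlist, hrest]; simp
          rw [hxa]
        · -- length ≥ 2, conjugate to shorten
          subst hrest
          -- identify head and last
          have hhead : w.toList.head? = some ⟨i, nw.head⟩ := by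
            rw [← hnwl]; exact nw.toList_head?
          have hk : k = i := by
            rw [hlist] at hhead
            simpa using congrArg (Option.map Sigma.fst) hhead
          have hlast : w.toList.getLast h0 = ⟨i, nw.last⟩ := by
            have h1 := List.getLast?_eq_getLast_of_ne_nil h0
            have h2 : w.toList.getLast? = some ⟨i, nw.last⟩ := by
              rw [← hnwl]; exact nw.toList_getLast?
            exact Option.some.inj (h1.symm.trans h2)
          set b : G i := nw.last with hbdef
          refine ?_
          have init_ne_one : ∀ l ∈ w.toList.dropLast, Sigma.snd l ≠ 1 :=
            fun l hl => w.ne_one l ((List.dropLast_sublist _).subset hl)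
          set init : Word G := ⟨w.toList.dropLast, init_ne_one,
            w.chain_ne.prefix (List.dropLast_prefix _)⟩ with hinitdef
          have hxinit : x = Word.prod init * CoprodI.of b := by
            conv_lhs => rw [← hprod, Word.prod, ← List.dropLast_append_getLast h0]
            rw [hlast, List.map_append, List.prod_append]
            simp [Word.prod, hinitdef]
          have hfst : init.fstIdx = some i := by
            have : init.toList = ⟨k, a⟩ :: (l2 :: rest2).dropLast := by
              simp only [hinitdef, hlist]
              rw [List.dropLast_cons₂]
            rw [Word.fstIdx, this]
            simp [hk]
          set y : CoprodI G := CoprodI.of b * x * (CoprodI.of b)⁻¹ with hydef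
          have hy : IsOfFinOrder y := by
            have := (MulAut.conj (CoprodI.of b)).toMonoidHom.isOfFinOrder hx
            simpa [MulAut.conj_apply] using this
          have hyeq : y = Word.prod (CoprodI.of b • init) := by
            rw [Word.prod_smul, hydef, hxinit]
            simp [mul_assoc]
          have hequivy : Word.equiv y = CoprodI.of b • init := by
            rw [hyeq]
            exact Word.equiv.apply_symm_apply _
          have hlen' : (Word.equiv y).toList.length ≤ n := by
            rw [hequivy]
            refine le_trans (length_smul_le b init hfst) ?_
            have h1 : init.toList.length = w.toList.length - 1 := by
              simp [hinitdef]
            have h2 : w.toList.length ≤ n + 1 := hlen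
            have h3 : w.toList.length ≠ 0 := fun h => h0 (List.eq_nil_of_length_eq_zero h)
            omega
          have hconjxy : IsConj x y := isConj_iff.mpr ⟨CoprodI.of b, rfl⟩
          rcases ih y hy hlen' with h1 | ⟨i', g, hconj⟩
          · left
            have : x = (CoprodI.of b)⁻¹ * y * CoprodI.of b := by
              rw [hydef]; group
            rw [this, h1]; group
          · exact Or.inr ⟨i', g, hconjxy.trans hconj⟩
      · -- cyclically reduced of length ≥ 1 with distinct end indices: infinite order
        exfalso
        obtain ⟨m, hm0, hm⟩ := isOfFinOrder_iff_pow_eq_one.mp hx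
        obtain ⟨m', rfl⟩ : ∃ m', m = m' + 1 := ⟨m - 1, by omega⟩
        exact neword_prod_ne_one (myRepl nw (Ne.symm hij) m')
          (by rw [myRepl_prod, hnwprod, hm])

end general2

namespace CoprodProofAux

abbrev M3 := Multiplicative (ZMod 3)
abbrev M2 := Multiplicative (ZMod 2)

def F : Bool → Type := fun b => cond b M3 M2

instance instGroupF : (b : Bool) → Group (F b)
  | true => inferInstanceAs (Group M3)
  | false => inferInstanceAs (Group M2)

instance instDecEqF : (b : Bool) → DecidableEq (F b)
  | true => inferInstanceAs (DecidableEq M3)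
  | false => inferInstanceAs (DecidableEq M2)

def fwd : Coprod M3 M2 →* CoprodI F :=
  Coprod.lift (CoprodI.of (M := F) (i := true)) (CoprodI.of (M := F) (i := false))

def bwdFam : (b : Bool) → F b →* Coprod M3 M2
  | true => Coprod.inl
  | false => Coprod.inr

def bwd : CoprodI F →* Coprod M3 M2 := CoprodI.lift bwdFam

lemma fwd_inl (a : M3) : fwd (Coprod.inl a) = CoprodI.of (M := F) (i := true) a :=
  Coprod.lift_apply_inl _ _ _

lemma fwd_inr (a : M2) : fwd (Coprod.inr a) = CoprodI.of (M := F) (i := false) a :=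
  Coprod.lift_apply_inr _ _ _

lemma bwd_of {i : Bool} (g : F i) : bwd (CoprodI.of g) = bwdFam i g := by
  simp [bwd, CoprodI.lift_of]

lemma bwd_fwd (x : Coprod M3 M2) : bwd (fwd x) = x := by
  have h : bwd.comp fwd = MonoidHom.id _ := by
    apply Coprod.hom_ext
    · refine MonoidHom.ext fun a => ?_
      show bwd (fwd (Coprod.inl a)) = Coprod.inl a
      rw [fwd_inl]; erw [bwd_of]
    · refine MonoidHom.ext fun a => ?_
      show bwd (fwd (Coprod.inr a)) = Coprod.inr a
      rw [fwd_inr]; erw [bwd_of]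
  exact DFunLike.congr_fun h x

end CoprodProofAux

open CoprodProofAux

/-- Every finite-order element of the free product `C₃ * C₂` is conjugate to an
element of one of the two free factors. -/
theorem coprod_finite_order_conj_factor
    (x : Monoid.Coprod (Multiplicative (ZMod 3)) (Multiplicative (ZMod 2)))
    (hx : IsOfFinOrder x) :
    (∃ a : Multiplicative (ZMod 3), IsConj x (Monoid.Coprod.inl a)) ∨
    (∃ b : Multiplicative (ZMod 2), IsConj x (Monoid.Coprod.inr b)) := by
  have hfx : IsOfFinOrder (fwd x) := fwd.isOfFinOrder hx
  rcases coprodI_finOrder_conj (fwd x) hfx with h1 | ⟨i, g, hconj⟩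
  · left
    refine ⟨1, ?_⟩
    have hx1 : x = 1 := by
      have := congrArg bwd h1
      rwa [bwd_fwd, map_one] at this
    rw [hx1, show (Coprod.inl (1 : M3) : Coprod M3 M2) = 1 from map_one _]
  · have hc : IsConj x (bwd (CoprodI.of g)) := by
      have := bwd.map_isConj hconj
      rwa [bwd_fwd] at this
    rw [bwd_of] at hc
    cases i
    · exact Or.inr ⟨g, hc⟩
    · exact Or.inl ⟨g, hc⟩
end
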